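/- arXiv:2509.11357 — 2 statements merged into one kernel-verified Lean document; each statement's English description precedes it below -/
import Mathlib

section
/- Strengthened CCV bound: under the first-violation elimination rule, the positive-part cumulative constraint violation max_j sum_{t=1}^T max(0, c_j(a_t, y_t)) is at most |A| − |A^c_{1:T}|, where A^c_{1:T} is the set of actions that satisfy all constraints in every round. -/
/-!
An action is played in round `t` only while it has survived every earlier round, and it is
eliminated as soon as it violates a constraint. Hence the rounds with a violation are played with
pairwise distinct actions, none of which satisfies all constraints throughout. So there are at
most `|A| - |A^c_{1:T}|` violating rounds, and each contributes at most `1` to the positive part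
of the violation of any constraint.
-/

open Finset

section Elimination

variable {A : Type*} {S : ℕ → Set A} {ok : ℕ → A → Prop}

theorem antitone_of_mem_succ_iff (hstep : ∀ t b, b ∈ S (t + 1) ↔ b ∈ S t ∧ ok t b) :
    Antitone S :=
  antitone_nat_of_succ_le fun t _ hb => ((hstep t _).mp hb).1

theorem injOn_of_mem_succ_iff (hstep : ∀ t b, b ∈ S (t + 1) ↔ b ∈ S t ∧ ok t b)
    {T : ℕ} {a : ℕ → A} (hplay : ∀ t < T, a t ∈ S t) :
    Set.InjOn a {t | t < T ∧ ¬ ok t (a t)} := by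
  have eliminated : ∀ s t, s < t → t < T → ¬ ok s (a s) → a t ≠ a s := by
    intro s t hst htT hbad heq
    have hsurvives : a t ∈ S (s + 1) := antitone_of_mem_succ_iff hstep hst (hplay t htT)
    rw [heq] at hsurvives
    exact hbad ((hstep s (a s)).mp hsurvives).2
  intro s ⟨hsT, hs⟩ t ⟨htT, ht⟩ heq
  rcases lt_trichotomy s t with hlt | rfl | hgt
  · exact absurd heq (eliminated s t hlt htT hs).symm
  · rfl
  · exact absurd heq (eliminated t s hgt hsT ht)

theorem card_violations_add_card_feasible_le [Fintype A]
    (hstep : ∀ t b, b ∈ S (t + 1) ↔ b ∈ S t ∧ ok t b)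
    {T : ℕ} {a : ℕ → A} (hplay : ∀ t < T, a t ∈ S t)
    [DecidablePred fun t => ¬ ok t (a t)] [DecidablePred fun b => ∀ t ∈ range T, ok t b] :
    #{t ∈ range T | ¬ ok t (a t)} + #{b | ∀ t ∈ range T, ok t b} ≤ Fintype.card A := by
  classical
  set feasible : Finset A := {b | ∀ t ∈ range T, ok t b}
  have hviol : #{t ∈ range T | ¬ ok t (a t)} ≤ #feasibleᶜ := by
    refine card_le_card_of_injOn a (fun t ht => ?_) ?_
    · rw [coe_filter] at ht
      simpa [feasible] using ⟨t, mem_range.mp ht.1, ht.2⟩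
    · simpa only [coe_filter, mem_range] using injOn_of_mem_succ_iff hstep hplay
  have := card_compl_add_card feasible
  omega

end Elimination

theorem sum_max_zero_le_card_pos {ι : Type*} (s : Finset ι) {f : ι → ℝ}
    [DecidablePred fun i => 0 < f i] (hf : ∀ i ∈ s, f i ≤ 1) :
    ∑ i ∈ s, max 0 (f i) ≤ #{i ∈ s | 0 < f i} := by
  rw [card_filter, Nat.cast_sum]
  refine sum_le_sum fun i hi => ?_
  by_cases hpos : 0 < f i
  · simpa [hpos] using hf i hi
  · simp [hpos, le_of_not_gt hpos]

open Classical in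
theorem stmt2_general {A Y : Type*} [Fintype A] {J T : ℕ}
    (c : Fin J → A → Y → ℝ)
    (hc : ∀ j a y, c j a y ∈ Set.Icc (-1 : ℝ) 1)
    (y : ℕ → Y) (a : ℕ → A)
    (Ahat : ℕ → Set A)
    (hstep : ∀ t b, b ∈ Ahat (t + 1) ↔ b ∈ Ahat t ∧ ∀ j, c j b (y t) ≤ 0)
    (hplay : ∀ t < T, a t ∈ Ahat t) :
    ∀ j, ∑ t ∈ Finset.range T, max 0 (c j (a t) (y t)) ≤
      (Fintype.card A : ℝ) -
        ((Finset.univ.filter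
            (fun b : A => ∀ t ∈ Finset.range T, ∀ j, c j b (y t) ≤ 0)).card : ℝ) := by
  intro j
  have hviol : #{t ∈ range T | 0 < c j (a t) (y t)} ≤
      #{t ∈ range T | ¬ ∀ j, c j (a t) (y t) ≤ 0} :=
    card_le_card <| monotone_filter_right _ fun t _ hpos hall => (hall j).not_gt hpos
  have hcount := card_violations_add_card_feasible_le hstep hplay
  calc ∑ t ∈ range T, max 0 (c j (a t) (y t))
      ≤ #{t ∈ range T | 0 < c j (a t) (y t)} :=
        sum_max_zero_le_card_pos _ fun t _ => (hc j (a t) (y t)).2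
    _ ≤ _ := by
        rw [le_sub_iff_add_le]
        exact_mod_cast (Nat.add_le_add_right hviol _).trans hcount

open Classical in
/-- Strengthened CCV bound: positive-part CCV is at most |A| - |A^c_{1:T}|. -/
theorem stmt2 {A Y : Type*} [Fintype A] {J T : ℕ}
    (c : Fin J → A → Y → ℝ)
    (hc : ∀ j a y, c j a y ∈ Set.Icc (-1 : ℝ) 1)
    (y : ℕ → Y) (a : ℕ → A)
    (Ahat : ℕ → Set A)
    (h0 : Ahat 0 = Set.univ)
    (hstep : ∀ t b, b ∈ Ahat (t + 1) ↔ b ∈ Ahat t ∧ ∀ j, c j b (y t) ≤ 0)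
    (hplay : ∀ t < T, a t ∈ Ahat t) :
    ∀ j, ∑ t ∈ Finset.range T, max 0 (c j (a t) (y t)) ≤
      (Fintype.card A : ℝ) -
        ((Finset.univ.filter
            (fun b : A => ∀ t ∈ Finset.range T, ∀ j, c j b (y t) ≤ 0)).card : ℝ) :=
  stmt2_general c hc y a Ahat hstep hplay
end

section
/- In the multi-subsequence elimination algorithm (parallel copies of the first-violation elimination rule, one per subsequence, with the agent playing from the union of active candidate sets), the cumulative constraint violation over any subsequence S ∈ S is at most |A|·|S_col|, where |S_col| is the number of subsequences. -/
/-!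
Every copy `S'` removes each action at most once, so the potential `Φ t = ∑_{S'} |Â_{t,S'}|`
starts at `|A|·|S_col|` and never increases. It strictly drops at every round whose action
violates some constraint: that action was played from some `Â_{t,S'}` with `t ∈ S'`, and that
copy removes it. Hence at most `|A|·|S_col|` rounds violate a constraint, and since `c_j ≤ 1`
while non-violating rounds contribute `≤ 0`, this count bounds the violation over `S`.
-/

open Finset

theorem card_filter_range_add_le_of_antitone {Φ : ℕ → ℕ} {P : ℕ → Prop} [DecidablePred P]
    {T : ℕ} (hanti : ∀ t < T, Φ (t + 1) ≤ Φ t) (hdrop : ∀ t < T, P t → Φ (t + 1) < Φ t) :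
    #{t ∈ range T | P t} + Φ T ≤ Φ 0 := by
  induction T with
  | zero => simp
  | succ T ih =>
    have ih := ih (fun t ht => hanti t (by omega)) (fun t ht => hdrop t (by omega))
    rw [range_add_one, filter_insert]
    by_cases hP : P T
    · rw [if_pos hP, card_insert_of_notMem (by simp)]
      have := hdrop T (by omega) hP
      omega
    · rw [if_neg hP]
      have := hanti T (by omega)
      omega

theorem sum_le_card_filter_pos {ι : Type*} (s : Finset ι) (f : ι → ℝ) (hf : ∀ i ∈ s, f i ≤ 1) :
    ∑ i ∈ s, f i ≤ #{i ∈ s | 0 < f i} := by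
  rw [card_filter, Nat.cast_sum]
  refine sum_le_sum fun i hi => ?_
  split_ifs with hpos
  · simpa using hf i hi
  · simpa using not_lt.1 hpos

section Elimination

variable {A Y : Type*} {J : ℕ}

/-- `Ahat t S` is the candidate set `Â_{t,S}` of the copy of the first-violation rule
run on the subsequence `S`. -/
def IsEliminationRun (c : Fin J → A → Y → ℝ) (y : ℕ → Y) (a : ℕ → A)
    (Scol : Finset (Finset ℕ)) (Ahat : ℕ → Finset ℕ → Set A) : Prop :=
  ∀ S ∈ Scol, ∀ t b, b ∈ Ahat (t + 1) S ↔
    (b ∈ Ahat t S ∧ ¬(t ∈ S ∧ b = a t ∧ ∃ j, 0 < c j b (y t)))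

variable {c : Fin J → A → Y → ℝ} {y : ℕ → Y} {a : ℕ → A} {Scol : Finset (Finset ℕ)}
  {Ahat : ℕ → Finset ℕ → Set A} {S : Finset ℕ} {t : ℕ}

namespace IsEliminationRun

theorem succ_subset (h : IsEliminationRun c y a Scol Ahat) (hS : S ∈ Scol) (t : ℕ) :
    Ahat (t + 1) S ⊆ Ahat t S :=
  fun b hb => ((h S hS t b).1 hb).1

theorem notMem_succ (h : IsEliminationRun c y a Scol Ahat) (hS : S ∈ Scol) (ht : t ∈ S)
    (hviol : ∃ j, 0 < c j (a t) (y t)) : a t ∉ Ahat (t + 1) S :=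
  fun hmem => ((h S hS t _).1 hmem).2 ⟨ht, rfl, hviol⟩

variable [Finite A]

theorem potential_succ_le (h : IsEliminationRun c y a Scol Ahat) (t : ℕ) :
    ∑ S ∈ Scol, (Ahat (t + 1) S).ncard ≤ ∑ S ∈ Scol, (Ahat t S).ncard :=
  sum_le_sum fun _ hS => Set.ncard_le_ncard (h.succ_subset hS t)

theorem potential_succ_lt (h : IsEliminationRun c y a Scol Ahat)
    (hplay : ∃ S ∈ Scol, t ∈ S ∧ a t ∈ Ahat t S) (hviol : ∃ j, 0 < c j (a t) (y t)) :
    ∑ S ∈ Scol, (Ahat (t + 1) S).ncard < ∑ S ∈ Scol, (Ahat t S).ncard := by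
  obtain ⟨S, hS, ht, hmem⟩ := hplay
  have hssub : Ahat (t + 1) S ⊂ Ahat t S :=
    (Set.ssubset_iff_of_subset (h.succ_subset hS t)).2 ⟨a t, hmem, h.notMem_succ hS ht hviol⟩
  exact sum_lt_sum (fun _ hS' => Set.ncard_le_ncard (h.succ_subset hS' t))
    ⟨S, hS, Set.ncard_lt_ncard hssub⟩

end IsEliminationRun

theorem IsEliminationRun.card_violations_le [Fintype A] {T : ℕ}
    (h : IsEliminationRun c y a Scol Ahat) (h0 : ∀ S ∈ Scol, Ahat 0 S = Set.univ)
    (hplay : ∀ t < T, ∃ S ∈ Scol, t ∈ S ∧ a t ∈ Ahat t S) :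
    #{t ∈ range T | ∃ j, 0 < c j (a t) (y t)} ≤ Fintype.card A * #Scol := by
  have hcount := card_filter_range_add_le_of_antitone
    (Φ := fun t => ∑ S ∈ Scol, (Ahat t S).ncard) (P := fun t => ∃ j, 0 < c j (a t) (y t))
    (fun t _ => h.potential_succ_le t) (fun t ht hviol => h.potential_succ_lt (hplay t ht) hviol)
  have hΦ0 : ∑ S ∈ Scol, (Ahat 0 S).ncard = Fintype.card A * #Scol := by
    rw [sum_congr rfl fun S hS => by rw [h0 S hS, Set.ncard_univ, Nat.card_eq_fintype_card],
      sum_const, smul_eq_mul, Nat.mul_comm]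
  omega

end Elimination

theorem stmt11_general {A Y : Type*} [Fintype A] {J T : ℕ}
    (c : Fin J → A → Y → ℝ)
    (hc : ∀ j a y, c j a y ∈ Set.Icc (-1 : ℝ) 1)
    (y : ℕ → Y) (a : ℕ → A)
    (Scol : Finset (Finset ℕ))
    (Ahat : ℕ → Finset ℕ → Set A)
    (h0 : ∀ S ∈ Scol, Ahat 0 S = Set.univ)
    (hstep : ∀ S ∈ Scol, ∀ t b, b ∈ Ahat (t + 1) S ↔
      (b ∈ Ahat t S ∧ ¬(t ∈ S ∧ b = a t ∧ ∃ j, 0 < c j b (y t))))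
    (hplay : ∀ t < T, ∃ S ∈ Scol, t ∈ S ∧ a t ∈ Ahat t S) :
    ∀ S ∈ Scol, ∀ j,
      ∑ t ∈ (Finset.range T).filter (fun t => t ∈ S), c j (a t) (y t) ≤
        (Fintype.card A : ℝ) * Scol.card := by
  intro S _ j
  have hviol_sub : {t ∈ {t ∈ range T | t ∈ S} | 0 < c j (a t) (y t)} ⊆
      {t ∈ range T | ∃ j, 0 < c j (a t) (y t)} := by
    intro t ht
    simp only [mem_filter] at ht ⊢
    exact ⟨ht.1.1, j, ht.2⟩
  calc ∑ t ∈ (Finset.range T).filter (fun t => t ∈ S), c j (a t) (y t)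
      ≤ #{t ∈ {t ∈ range T | t ∈ S} | 0 < c j (a t) (y t)} :=
        sum_le_card_filter_pos _ _ fun t _ => (hc j (a t) (y t)).2
    _ ≤ #{t ∈ range T | ∃ j, 0 < c j (a t) (y t)} := by exact_mod_cast card_le_card hviol_sub
    _ ≤ (Fintype.card A : ℝ) * Scol.card := by
        exact_mod_cast IsEliminationRun.card_violations_le hstep h0 hplay

/-- Multi-subsequence first-violation elimination: CCV over any subsequence is at most
|A|·|S_col|. -/
theorem stmt11 {A Y : Type*} [Fintype A] [DecidableEq A] {J T : ℕ}
    (c : Fin J → A → Y → ℝ)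
    (hc : ∀ j a y, c j a y ∈ Set.Icc (-1 : ℝ) 1)
    (y : ℕ → Y) (a : ℕ → A)
    (Scol : Finset (Finset ℕ))
    (hcover : ∀ t < T, ∃ S ∈ Scol, t ∈ S)
    (Ahat : ℕ → Finset ℕ → Set A)
    (h0 : ∀ S ∈ Scol, Ahat 0 S = Set.univ)
    (hstep : ∀ S ∈ Scol, ∀ t b, b ∈ Ahat (t + 1) S ↔
      (b ∈ Ahat t S ∧ ¬(t ∈ S ∧ b = a t ∧ ∃ j, 0 < c j b (y t))))
    (hplay : ∀ t < T, ∃ S ∈ Scol, t ∈ S ∧ a t ∈ Ahat t S) :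
    ∀ S ∈ Scol, ∀ j,
      ∑ t ∈ (Finset.range T).filter (fun t => t ∈ S), c j (a t) (y t) ≤
        (Fintype.card A : ℝ) * Scol.card :=
  stmt11_general c hc y a Scol Ahat h0 hstep hplay
end
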